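/- Dissipation across the shock (Proposition 3.5): Suppose (χ,N) is a classical shock solution on [0,T] with shock front σ, and a,b ∈ (0,∞) satisfy a < σ(t) < b for all t ∈ [0,T]. Define the total energy of the material segment [a,b] by K(t) + E(t) := ∫_{σ(t)}^{b} ½ χ_t(s,t)² ds + ∫_{a}^{σ(t)} ½ N₁² ds + ∫_{σ(t)}^{b} ½ N(s,t)² ds. Then for all t ∈ [0,T], (K+E)′(t) = P(t) + Q(t), where P(t) := N(b,t)χ_t(b,t) is the total power exerted by the tensile forces on the segment (the power at s = a vanishes since χ_t(a,t) = 0), and Q(t) := −(σ′(t)/2)(N₁ − N(σ(t)⁺,t))²(σ′(t)² − 1), and moreover Q(t) < 0. -/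

import Mathlib

open Set Filter Topology

noncomputable section

/-- The uncurried version of a function of two real variables `(s, t)`. -/
def uc (χ : ℝ → ℝ → ℝ) : ℝ × ℝ → ℝ := fun p => χ p.1 p.2

/-- Directional partial derivative of `f` within the set `S` at `p` in direction `v`. -/
def pder (f : ℝ × ℝ → ℝ) (S : Set (ℝ × ℝ)) (v : ℝ × ℝ) (p : ℝ × ℝ) : ℝ :=
  fderivWithin ℝ f S p v

/-- The extensible region `{(s,t) : t ∈ [0,T], s ≥ σ(t)}`. -/
def Ereg (σ : ℝ → ℝ) (T : ℝ) : Set (ℝ × ℝ) :=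
  {p : ℝ × ℝ | p.2 ∈ Icc 0 T ∧ σ p.2 ≤ p.1}

/-- The extensible region for all nonnegative times. -/
def EregInf (σ : ℝ → ℝ) : Set (ℝ × ℝ) :=
  {p : ℝ × ℝ | 0 ≤ p.2 ∧ σ p.2 ≤ p.1}

/-- D'Alembert's solution of the wave equation `χ_tt = χ_ss` with data `(χ₀, χ₁)`. -/
def dAlem (χ₀ χ₁ : ℝ → ℝ) (s t : ℝ) : ℝ :=
  (χ₀ (s + t) + χ₀ (s - t)) / 2 + (∫ ξ in (s - t)..(s + t), χ₁ ξ) / 2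

/-- Classical shock front initial data `(χ₀, χ₁, N₀)` with initial shock front `σ₀`,
threshold tension `N₁`, lower tension bound `η` and tension `ζ t + τ` prescribed at
the infinite end.  One-sided values and derivatives at `σ₀` are taken from the right,
i.e. within `Ici σ₀`. -/
structure IsShockData (N₁ η τ ζ σ₀ : ℝ) (χ₀ χ₁ N₀ : ℝ → ℝ) : Prop where
  sigma0_pos : 0 < σ₀
  chi0_cont : ContinuousOn χ₀ (Ici 0)
  chi1_bdd : ∀ K : ℝ, ∃ M, ∀ s ∈ Icc (0 : ℝ) K, |χ₁ s| ≤ M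
  N0_bdd : ∀ K : ℝ, ∃ M, ∀ s ∈ Icc (0 : ℝ) K, |N₀ s| ≤ M
  chi0_smooth : ContDiffOn ℝ 2 χ₀ (Ici σ₀)
  chi1_smooth : ContDiffOn ℝ 1 χ₁ (Ici σ₀)
  N0_smooth : ContDiffOn ℝ 1 N₀ (Ici σ₀)
  N0_eq : ∀ s ∈ Ici σ₀, N₀ s = derivWithin χ₀ (Ici σ₀) s
  N0_gt : ∀ s ∈ Ici σ₀, η < N₀ s
  N0_lt : ∀ s ∈ Ici σ₀, N₀ s < N₁
  chi0_lim : Tendsto (derivWithin χ₀ (Ici σ₀)) atTop (𝓝 τ)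
  chi1_lim : Tendsto (derivWithin χ₁ (Ici σ₀)) atTop (𝓝 ζ)
  front : χ₀ σ₀ = N₁ * σ₀
  speed : 1 < χ₁ σ₀ / (N₁ - derivWithin χ₀ (Ici σ₀) σ₀)
  inext_chi0 : ∀ s ∈ Icc 0 σ₀, χ₀ s = N₁ * s
  inext_chi1 : ∀ s ∈ Ico 0 σ₀, χ₁ s = 0
  inext_N0 : ∀ s ∈ Ico 0 σ₀,
    N₀ s = N₀ σ₀ + (χ₁ σ₀ / (N₁ - derivWithin χ₀ (Ici σ₀) σ₀)) ^ 2 * (N₁ - N₀ σ₀)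

/-- `(χ, N)` together with the shock front `σ` is a classical shock solution on the
time interval `[0,T]` with initial data `(χ₀, χ₁, N₀)` and initial shock front `σ₀`.
Partial derivatives in the extensible region are taken within `Ereg σ T`, and the
shock speed is `derivWithin σ (Icc 0 T)`. -/
structure IsShockSolution (N₁ η τ ζ σ₀ T : ℝ) (χ₀ χ₁ N₀ : ℝ → ℝ)
    (χ N : ℝ → ℝ → ℝ) (σ : ℝ → ℝ) : Prop where
  chi_cont : ContinuousOn (uc χ) (Ici 0 ×ˢ Icc 0 T)
  chit_bdd : ∀ K : ℝ, ∃ M, ∀ p ∈ Ereg σ T, p.1 ≤ K → |pder (uc χ) (Ereg σ T) (0, 1) p| ≤ M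
  N_bdd : ∀ K : ℝ, ∃ M, ∀ s ∈ Icc (0 : ℝ) K, ∀ t ∈ Icc (0 : ℝ) T, |N s t| ≤ M
  sigma_smooth : ContDiffOn ℝ 2 σ (Icc 0 T)
  sigma_ge : ∀ t ∈ Icc 0 T, σ₀ ≤ σ t
  sigma_init : σ 0 = σ₀
  chi_smooth : ContDiffOn ℝ 2 (uc χ) (Ereg σ T)
  N_smooth : ContDiffOn ℝ 1 (uc N) (Ereg σ T)
  N_eq : ∀ p ∈ Ereg σ T, N p.1 p.2 = pder (uc χ) (Ereg σ T) (1, 0) p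
  N_gt : ∀ p ∈ Ereg σ T, η < N p.1 p.2
  N_lt : ∀ p ∈ Ereg σ T, N p.1 p.2 < N₁
  front : ∀ t ∈ Icc 0 T, χ (σ t) t = N₁ * σ t
  sigma_der : ∀ t ∈ Icc 0 T,
    derivWithin σ (Icc 0 T) t = pder (uc χ) (Ereg σ T) (0, 1) (σ t, t) / (N₁ - N (σ t) t)
  sigma_der_gt : ∀ t ∈ Icc 0 T, 1 < derivWithin σ (Icc 0 T) t
  inext_chi : ∀ t ∈ Icc 0 T, ∀ s ∈ Icc 0 (σ t), χ s t = N₁ * s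
  inext_N : ∀ t ∈ Icc 0 T, ∀ s ∈ Ico 0 (σ t),
    N s t = N (σ t) t + (derivWithin σ (Icc 0 T) t) ^ 2 * (N₁ - N (σ t) t)
  inext_N_gt : ∀ t ∈ Icc 0 T, ∀ s ∈ Ico 0 (σ t), N₁ < N s t
  wave : ∀ p ∈ Ereg σ T,
    pder (pder (uc χ) (Ereg σ T) (0, 1)) (Ereg σ T) (0, 1) p
      = pder (pder (uc χ) (Ereg σ T) (1, 0)) (Ereg σ T) (1, 0) p
  bc_infty : ∀ t ∈ Icc 0 T,
    Tendsto (fun s => pder (uc χ) (Ereg σ T) (1, 0) (s, t)) atTop (𝓝 (ζ * t + τ))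
  init_chi : ∀ s ∈ Ici σ₀, χ s 0 = χ₀ s
  init_chit : ∀ s ∈ Ici σ₀, pder (uc χ) (Ereg σ T) (0, 1) (s, 0) = χ₁ s

set_option maxHeartbeats 1000000

namespace ShockAux


lemma hasDerivWithinAt_singleton' (f : ℝ → ℝ) (x d : ℝ) :
    HasDerivWithinAt f d {x} x := by
  rw [hasDerivWithinAt_iff_isLittleO, nhdsWithin_singleton, Asymptotics.isLittleO_iff]
  intro c hc
  rw [eventually_pure]
  simp

lemma isClosed_ereg {σ : ℝ → ℝ} {T : ℝ} (hσc : ContinuousOn σ (Icc 0 T)) :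
    IsClosed (Ereg σ T) := by
  have h1 : IsClosed {p : ℝ × ℝ | p.2 ∈ Icc 0 T} := isClosed_Icc.preimage continuous_snd
  have h2 : ContinuousOn (fun p : ℝ × ℝ => σ p.2 - p.1) {p : ℝ × ℝ | p.2 ∈ Icc 0 T} :=
    (hσc.comp continuous_snd.continuousOn fun p hp => hp).sub continuous_fst.continuousOn
  have : Ereg σ T
      = {p : ℝ × ℝ | p.2 ∈ Icc 0 T} ∩ (fun p : ℝ × ℝ => σ p.2 - p.1) ⁻¹' Iic 0 := by
    ext p
    simp only [Ereg, mem_setOf_eq, mem_inter_iff, mem_preimage, mem_Iic, sub_nonpos,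
      and_congr_right_iff]
  rw [this]
  exact h2.preimage_isClosed_of_isClosed h1 isClosed_Iic

lemma ereg_cone {σ : ℝ → ℝ} {T : ℝ} (hT : 0 < T) {K : ℝ} (hK : 0 ≤ K)
    (hσl : ∀ u ∈ Icc (0:ℝ) T, ∀ v ∈ Icc (0:ℝ) T, |σ u - σ v| ≤ K * |u - v|)
    {p : ℝ × ℝ} (hp : p ∈ Ereg σ T) :
    UniqueDiffWithinAt ℝ (Ereg σ T) p ∧ p ∈ closure (interior (Ereg σ T)) := by
  set C : Set (ℝ × ℝ) := {q : ℝ × ℝ | q.2 ∈ Icc 0 T ∧ p.1 + K * |q.2 - p.2| ≤ q.1} with hC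
  have hCsub : C ⊆ Ereg σ T := by
    rintro q ⟨hq1, hq2⟩
    refine ⟨hq1, ?_⟩
    have h1 := hσl q.2 hq1 p.2 hp.1
    have h2 := le_abs_self (σ q.2 - σ p.2)
    have h3 := hp.2
    linarith
  have hpC : p ∈ C := ⟨hp.1, by simp⟩
  have hconv : Convex ℝ C := by
    rintro ⟨x1, y1⟩ ⟨hy1, hx1⟩ ⟨x2, y2⟩ ⟨hy2, hx2⟩ α β hα hβ hαβ
    constructor
    · exact (convex_Icc (0:ℝ) T) hy1 hy2 hα hβ hαβ
    · have habs : |α * y1 + β * y2 - p.2| ≤ α * |y1 - p.2| + β * |y2 - p.2| := by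
        have : α * y1 + β * y2 - p.2 = α * (y1 - p.2) + β * (y2 - p.2) := by
          have : α * p.2 + β * p.2 = p.2 := by
            rw [← add_mul, hαβ, one_mul]
          linarith [this]
        rw [this]
        calc |α * (y1 - p.2) + β * (y2 - p.2)|
            ≤ |α * (y1 - p.2)| + |β * (y2 - p.2)| := abs_add_le _ _
          _ = α * |y1 - p.2| + β * |y2 - p.2| := by
              rw [abs_mul, abs_mul, abs_of_nonneg hα, abs_of_nonneg hβ]
      simp only [mem_setOf_eq] at hx1 hx2 ⊢
      have : K * |α * y1 + β * y2 - p.2| ≤ α * (K * |y1 - p.2|) + β * (K * |y2 - p.2|) := by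
        nlinarith
      have hp1 : α * p.1 + β * p.1 = p.1 := by rw [← add_mul, hαβ, one_mul]
      simp only [Prod.smul_mk, Prod.mk_add_mk, smul_eq_mul]
      nlinarith
  have hint : (interior C).Nonempty := by
    have hopen : IsOpen (Ioi (p.1 + K * T) ×ˢ Ioo (0:ℝ) T) := isOpen_Ioi.prod isOpen_Ioo
    have hsub : (Ioi (p.1 + K * T) ×ˢ Ioo (0:ℝ) T) ⊆ C := by
      rintro ⟨x, y⟩ ⟨hx, hy⟩
      refine ⟨⟨hy.1.le, hy.2.le⟩, ?_⟩
      simp only [mem_Ioi] at hx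
      have h1 : |y - p.2| ≤ T := by
        rw [abs_le]
        constructor <;> [linarith [hp.1.2, hy.1.le]; linarith [hp.1.1, hy.2.le]]
      nlinarith
    have hmem : (p.1 + K * T + 1, T / 2) ∈ Ioi (p.1 + K * T) ×ˢ Ioo (0:ℝ) T := by
      constructor
      · simp only [mem_Ioi]; linarith
      · constructor <;> simp <;> linarith
    exact ⟨_, interior_maximal hsub hopen hmem⟩
  have hud : UniqueDiffWithinAt ℝ C p := uniqueDiffOn_convex hconv hint p hpC
  refine ⟨hud.mono hCsub, ?_⟩
  obtain ⟨y, hy⟩ := hint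
  have hseq : ∀ n : ℕ, ((n:ℝ) + 2)⁻¹ • y + (1 - ((n:ℝ) + 2)⁻¹) • p ∈ interior C := by
    intro n
    have h1 : (0:ℝ) < ((n:ℝ) + 2)⁻¹ := by positivity
    have h2 : ((n:ℝ) + 2)⁻¹ ≤ 1 := by
      rw [inv_le_one_iff₀]; right; push_cast; linarith [Nat.cast_nonneg (α := ℝ) n]
    exact hconv.combo_interior_closure_mem_interior hy (subset_closure hpC) h1
      (by linarith) (by ring)
  have hten : Tendsto (fun n : ℕ => ((n:ℝ) + 2)⁻¹ • y + (1 - ((n:ℝ) + 2)⁻¹) • p)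
      atTop (𝓝 p) := by
    have h0 : Tendsto (fun n : ℕ => ((n:ℝ) + 2)⁻¹) atTop (𝓝 0) := by
      apply tendsto_inv_atTop_zero.comp
      exact tendsto_atTop_add_const_right atTop 2 tendsto_natCast_atTop_atTop
    have : Tendsto (fun n : ℕ => ((n:ℝ) + 2)⁻¹ • y + (1 - ((n:ℝ) + 2)⁻¹) • p)
        atTop (𝓝 ((0:ℝ) • y + ((1:ℝ) - 0) • p)) := by
      exact (h0.smul_const y).add ((tendsto_const_nhds.sub h0).smul_const p)
    simpa using this
  have : p ∈ closure (interior C) :=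
    mem_closure_of_tendsto hten (Eventually.of_forall hseq)
  exact closure_mono (interior_mono hCsub) this


lemma deriv_moving_integral
    {σ : ℝ → ℝ} {T : ℝ} (b t : ℝ) (ht : t ∈ Icc 0 T)
    (g h : ℝ × ℝ → ℝ)
    (hσc : ContinuousOn σ (Icc 0 T))
    (hσm : MonotoneOn σ (Icc 0 T))
    {σ' : ℝ} (hσd : HasDerivWithinAt σ σ' (Icc 0 T) t)
    (hble : ∀ u ∈ Icc (0:ℝ) T, σ u ≤ b)
    (hg : ContinuousOn g (Ereg σ T))
    (hh : ContinuousOn h (Ereg σ T))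
    (hgh : ∀ q ∈ Ereg σ T, q.1 ≤ b →
      HasDerivWithinAt (fun w => g (q.1, w)) (h q) {w | w ∈ Icc 0 T ∧ σ w ≤ q.1} q.2) :
    HasDerivWithinAt (fun u => ∫ s in σ u..b, g (s, u))
      (-σ' * g (σ t, t) + ∫ s in σ t..b, h (s, t)) (Icc 0 T) t := by
  have hT0 : (0:ℝ) ≤ T := le_trans ht.1 ht.2
  have h0T : (0:ℝ) ∈ Icc (0:ℝ) T := ⟨le_refl _, hT0⟩
  set c := σ t with hc
  set K : Set (ℝ × ℝ) := {p : ℝ × ℝ | p.2 ∈ Icc 0 T ∧ σ p.2 ≤ p.1 ∧ p.1 ≤ b} with hKdef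
  have hKsub : K ⊆ Ereg σ T := fun p hp => ⟨hp.1, hp.2.1⟩
  have hKcl : IsClosed K := by
    have hKeq : K = Ereg σ T ∩ {p : ℝ × ℝ | p.1 ≤ b} := by
      ext p
      simp only [hKdef, Ereg, mem_setOf_eq, mem_inter_iff]
      tauto
    rw [hKeq]
    exact (isClosed_ereg hσc).inter (isClosed_le continuous_fst continuous_const)
  have hKcomp : IsCompact K := by
    have hic : IsCompact (Icc (σ 0) b ×ˢ Icc (0:ℝ) T) := isCompact_Icc.prod isCompact_Icc
    apply hic.of_isClosed_subset hKcl
    rintro p hp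
    exact ⟨⟨le_trans (hσm h0T hp.1 hp.1.1) hp.2.1, hp.2.2⟩, hp.1⟩
  have hcontslice : ∀ (f : ℝ × ℝ → ℝ), ContinuousOn f (Ereg σ T) → ∀ v ∈ Icc (0:ℝ) T,
      ∀ x y : ℝ, σ v ≤ x → ContinuousOn (fun s => f (s, v)) (Icc x y) := by
    intro f hf v hv x y hx
    apply hf.comp ((continuous_id.prodMk continuous_const).continuousOn)
    intro s hs
    exact ⟨hv, le_trans hx hs.1⟩
  rw [hasDerivWithinAt_iff_isLittleO, Asymptotics.isLittleO_iff]
  intro ε hε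
  set L : ℝ := |σ'| + 1 with hLdef
  have hL1 : (1:ℝ) ≤ L := by have := abs_nonneg σ'; simp only [hLdef]; linarith
  have hLpos : (0:ℝ) < L := lt_of_lt_of_le one_pos hL1
  set B : ℝ := |b - σ 0| + 1 with hBdef
  have hB1 : (1:ℝ) ≤ B := by have := abs_nonneg (b - σ 0); simp only [hBdef]; linarith
  set Mg : ℝ := |g (c, t)| + 1 with hMgdef
  have hMg1 : (1:ℝ) ≤ Mg := by have := abs_nonneg (g (c, t)); simp only [hMgdef]; linarith
  have hMggt : |g (c, t)| ≤ Mg := by simp only [hMgdef]; linarith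
  obtain ⟨M0, hM0⟩ := hKcomp.exists_bound_of_continuousOn (hh.mono hKsub)
  set M : ℝ := max M0 0 with hMdef
  have hMnn : 0 ≤ M := le_max_right _ _
  have hMb : ∀ p ∈ K, |h p| ≤ M := fun p hp =>
    le_trans (by simpa [Real.norm_eq_abs] using hM0 p hp) (le_max_left _ _)
  set ε₀ : ℝ := ε / (L + B + Mg + 1) with hε₀def
  have hden : (0:ℝ) < L + B + Mg + 1 := by linarith
  have hε₀pos : 0 < ε₀ := div_pos hε hden
  obtain ⟨δ₁, hδ₁pos, hδ₁⟩ := Metric.uniformContinuousOn_iff.1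
    (hKcomp.uniformContinuousOn_of_continuous (hg.mono hKsub)) ε₀ hε₀pos
  obtain ⟨δ₂, hδ₂pos, hδ₂⟩ := Metric.uniformContinuousOn_iff.1
    (hKcomp.uniformContinuousOn_of_continuous (hh.mono hKsub)) ε₀ hε₀pos
  set δ : ℝ := min δ₁ δ₂ with hδdef
  have hδpos : 0 < δ := lt_min hδ₁pos hδ₂pos
  have hδδ₁ : δ ≤ δ₁ := min_le_left _ _
  have hδδ₂ : δ ≤ δ₂ := min_le_right _ _
  set r : ℝ := min (δ / L) (ε₀ / (M * L + 1)) with hrdef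
  have hMLpos : (0:ℝ) < M * L + 1 := by nlinarith
  have hrpos : 0 < r := lt_min (div_pos hδpos hLpos) (div_pos hε₀pos hMLpos)
  have hrδL : r ≤ δ / L := min_le_left _ _
  have hrδ : r ≤ δ := le_trans hrδL (div_le_self hδpos.le hL1)
  have hrML : M * L * r ≤ ε₀ := by
    have h1 : r ≤ ε₀ / (M * L + 1) := min_le_right _ _
    have h2 : M * L * r ≤ M * L * (ε₀ / (M * L + 1)) := by
      apply mul_le_mul_of_nonneg_left h1 (by positivity)
    calc M * L * r ≤ M * L * (ε₀ / (M * L + 1)) := h2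
      _ ≤ ε₀ := by
          rw [mul_div_assoc']
          rw [div_le_iff₀ hMLpos]
          nlinarith
  have ev1 : ∀ᶠ u in 𝓝[Icc 0 T] t, |σ u - c - (u - t) * σ'| ≤ ε₀ * |u - t| := by
    have := (hasDerivWithinAt_iff_isLittleO.1 hσd).def hε₀pos
    filter_upwards [this] with u hu
    simpa [Real.norm_eq_abs, smul_eq_mul, mul_comm] using hu
  have ev2 : ∀ᶠ u in 𝓝[Icc 0 T] t, |σ u - c - (u - t) * σ'| ≤ 1 * |u - t| := by
    have := (hasDerivWithinAt_iff_isLittleO.1 hσd).def one_pos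
    filter_upwards [this] with u hu
    simpa [Real.norm_eq_abs, smul_eq_mul, mul_comm] using hu
  have ev3 : ∀ᶠ u in 𝓝[Icc 0 T] t, |u - t| < r := by
    apply eventually_nhdsWithin_of_eventually_nhds
    filter_upwards [Metric.ball_mem_nhds t hrpos] with u hu
    simpa [Real.dist_eq] using hu
  filter_upwards [self_mem_nhdsWithin, ev1, ev2, ev3] with u hu hu1 hu2 hu3
  have hLd : |σ u - c| ≤ L * |u - t| := by
    calc |σ u - c| = |(σ u - c - (u - t) * σ') + (u - t) * σ'| := by ring_nf
      _ ≤ |σ u - c - (u - t) * σ'| + |(u - t) * σ'| := abs_add_le _ _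
      _ ≤ 1 * |u - t| + |u - t| * |σ'| := by
          rw [abs_mul]; exact add_le_add hu2 (le_refl _)
      _ = L * |u - t| := by simp only [hLdef]; ring
  have hub : σ u ≤ b := hble u hu
  have hcb : c ≤ b := hble t ht
  have hσ0u : σ 0 ≤ σ u := hσm h0T hu hu.1
  have hσ0c : σ 0 ≤ c := hσm h0T ht ht.1
  have hεval : ε₀ * (L + B + Mg + 1) = ε := by
    rw [hε₀def, div_mul_cancel₀ _ hden.ne']
  rw [smul_eq_mul, Real.norm_eq_abs, Real.norm_eq_abs]
  rcases le_total t u with htu | hut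
  · -- case t ≤ u
    have hcu : c ≤ σ u := hσm ht hu htu
    have hut' : u - t = |u - t| := (abs_of_nonneg (by linarith)).symm
    have ig1 : IntervalIntegrable (fun s => g (s, t)) MeasureTheory.volume c (σ u) :=
      (hcontslice g hg t ht c (σ u) le_rfl).intervalIntegrable_of_Icc hcu
    have ig2 : IntervalIntegrable (fun s => g (s, t)) MeasureTheory.volume (σ u) b :=
      (hcontslice g hg t ht (σ u) b hcu).intervalIntegrable_of_Icc hub
    have ig3 : IntervalIntegrable (fun s => g (s, u)) MeasureTheory.volume (σ u) b :=
      (hcontslice g hg u hu (σ u) b le_rfl).intervalIntegrable_of_Icc hub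
    have ih1 : IntervalIntegrable (fun s => h (s, t)) MeasureTheory.volume c (σ u) :=
      (hcontslice h hh t ht c (σ u) le_rfl).intervalIntegrable_of_Icc hcu
    have ih2 : IntervalIntegrable (fun s => h (s, t)) MeasureTheory.volume (σ u) b :=
      (hcontslice h hh t ht (σ u) b hcu).intervalIntegrable_of_Icc hub
    set A1 := ∫ s in c..σ u, g (s, t) with hA1
    set A2 := ∫ s in σ u..b, g (s, t) with hA2
    set A3 := ∫ s in σ u..b, g (s, u) with hA3
    set B1 := ∫ s in c..σ u, h (s, t) with hB1'
    set B2 := ∫ s in σ u..b, h (s, t) with hB2'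
    -- pointwise MVT bound
    have hpt : ∀ s ∈ Set.Ioc (σ u) b, |g (s, u) - g (s, t) - (u - t) * h (s, t)|
        ≤ ε₀ * (u - t) := by
      intro s hs
      have hsK : ∀ v ∈ Icc t u, (s, v) ∈ K := by
        intro v hv
        have hv' : v ∈ Icc (0:ℝ) T := ⟨le_trans ht.1 hv.1, le_trans hv.2 hu.2⟩
        exact ⟨hv', le_trans (hσm hv' hu hv.2) hs.1.le, hs.2⟩
      have hF : ∀ v ∈ Icc t u, HasDerivWithinAt (fun w => g (s, w) - w * h (s, t))
          (h (s, v) - h (s, t)) (Icc t u) v := by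
        intro v hv
        have hq : (s, v) ∈ Ereg σ T := hKsub (hsK v hv)
        have h1 := hgh (s, v) hq hs.2
        have hsub2 : Icc t u ⊆ {w | w ∈ Icc 0 T ∧ σ w ≤ s} := by
          intro w hw
          have hw' : w ∈ Icc (0:ℝ) T := ⟨le_trans ht.1 hw.1, le_trans hw.2 hu.2⟩
          exact ⟨hw', le_trans (hσm hw' hu hw.2) hs.1.le⟩
        have h2 := (h1.mono hsub2).sub
          ((hasDerivWithinAt_id v (Icc t u)).mul_const (h (s, t)))
        simpa [Pi.sub_def] using h2
      have hbd : ∀ v ∈ Ico t u, ‖h (s, v) - h (s, t)‖ ≤ ε₀ := by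
        intro v hv
        have hd : dist ((s, v) : ℝ × ℝ) ((s, t) : ℝ × ℝ) < δ₂ := by
          rw [Prod.dist_eq]
          have h1 : dist s s = 0 := dist_self s
          have h2 : dist v t = |v - t| := Real.dist_eq v t
          have h3 : |v - t| < δ₂ := by
            rw [abs_of_nonneg (by linarith [hv.1] : (0:ℝ) ≤ v - t)]
            have : v - t ≤ |u - t| := by rw [← hut']; linarith [hv.2]
            linarith [lt_of_le_of_lt this hu3, hrδ, hδδ₂]
          rw [h1, h2]
          exact max_lt hδ₂pos h3
        have h1 := hδ₂ (s, v) (hsK v ⟨hv.1, hv.2.le⟩) (s, t) (hsK t ⟨le_rfl, htu⟩) hd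
        rw [Real.norm_eq_abs]
        exact le_of_lt (by simpa [Real.dist_eq] using h1)
      have hmvt := norm_image_sub_le_of_norm_deriv_le_segment' hF hbd u (right_mem_Icc.2 htu)
      calc |g (s, u) - g (s, t) - (u - t) * h (s, t)|
          = ‖(g (s, u) - u * h (s, t)) - (g (s, t) - t * h (s, t))‖ := by
            rw [Real.norm_eq_abs]; ring_nf
        _ ≤ ε₀ * (u - t) := hmvt
    have hb1 : |∫ s in σ u..b, (g (s, u) - g (s, t) - (u - t) * h (s, t))|
        ≤ (ε₀ * (u - t)) * |b - σ u| := by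
      rw [← Real.norm_eq_abs]
      apply intervalIntegral.norm_integral_le_of_norm_le_const
      intro x hx
      rw [Set.uIoc_of_le hub] at hx
      rw [Real.norm_eq_abs]
      exact hpt x hx
    have hT2a : (∫ s in σ u..b, (g (s, u) - g (s, t) - (u - t) * h (s, t)))
        = A3 - A2 - (u - t) * B2 := by
      rw [intervalIntegral.integral_sub (ig3.sub ig2) (ih2.const_mul _),
        intervalIntegral.integral_sub ig3 ig2, intervalIntegral.integral_const_mul]
    have hb2 : |∫ s in c..σ u, (g (s, t) - g (c, t))| ≤ ε₀ * |σ u - c| := by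
      rw [← Real.norm_eq_abs]
      apply intervalIntegral.norm_integral_le_of_norm_le_const
      intro x hx
      rw [Set.uIoc_of_le hcu] at hx
      have hxK : (x, t) ∈ K := ⟨ht, hx.1.le, le_trans hx.2 hub⟩
      have hcK : (c, t) ∈ K := ⟨ht, le_rfl, hcb⟩
      have hLrδ : L * r ≤ δ := by
        calc L * r ≤ L * (δ / L) := mul_le_mul_of_nonneg_left hrδL hLpos.le
          _ = δ := by field_simp
      have hdist : dist ((x, t) : ℝ × ℝ) ((c, t) : ℝ × ℝ) < δ₁ := by
        rw [Prod.dist_eq, dist_self, Real.dist_eq]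
        apply max_lt _ hδ₁pos
        have h1 : |x - c| ≤ |σ u - c| := by
          rw [abs_of_nonneg (by linarith [hx.1.le] : (0:ℝ) ≤ x - c),
            abs_of_nonneg (by linarith : (0:ℝ) ≤ σ u - c)]
          linarith [hx.2]
        have h2 : L * |u - t| < L * r := mul_lt_mul_of_pos_left hu3 hLpos
        linarith [hLd, h1]
      rw [Real.norm_eq_abs]
      exact le_of_lt (by simpa [Real.dist_eq] using hδ₁ _ hxK _ hcK hdist)
    have hT1 : (∫ s in c..σ u, (g (s, t) - g (c, t))) = A1 - (σ u - c) * g (c, t) := by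
      rw [intervalIntegral.integral_sub ig1 intervalIntegrable_const,
        intervalIntegral.integral_const, smul_eq_mul]
    have hB1b : |B1| ≤ M * |σ u - c| := by
      rw [hB1', ← Real.norm_eq_abs]
      apply intervalIntegral.norm_integral_le_of_norm_le_const
      intro x hx
      rw [Set.uIoc_of_le hcu] at hx
      rw [Real.norm_eq_abs]
      exact hMb (x, t) ⟨ht, hx.1.le, le_trans hx.2 hub⟩
    have hsplitG : A1 + A2 = ∫ s in c..b, g (s, t) :=
      intervalIntegral.integral_add_adjacent_intervals ig1 ig2
    have hsplitH : B1 + B2 = ∫ s in c..b, h (s, t) :=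
      intervalIntegral.integral_add_adjacent_intervals ih1 ih2
    have hkey : A3 - (∫ s in c..b, g (s, t))
        - (u - t) * (-σ' * g (c, t) + ∫ s in c..b, h (s, t))
        = (∫ s in σ u..b, (g (s, u) - g (s, t) - (u - t) * h (s, t)))
          - (∫ s in c..σ u, (g (s, t) - g (c, t)))
          - g (c, t) * (σ u - c - (u - t) * σ') - (u - t) * B1 := by
      rw [hT2a, hT1, ← hsplitG, ← hsplitH]; ring
    have e3 : |g (c, t) * (σ u - c - (u - t) * σ')| ≤ Mg * (ε₀ * |u - t|) := by
      rw [abs_mul]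
      exact mul_le_mul hMggt hu1 (abs_nonneg _) (by linarith)
    have e4 : |(u - t) * B1| ≤ ε₀ * |u - t| := by
      rw [abs_mul]
      have h1 : |B1| ≤ M * (L * |u - t|) :=
        le_trans hB1b (mul_le_mul_of_nonneg_left hLd hMnn)
      calc |u - t| * |B1| ≤ |u - t| * (M * (L * |u - t|)) :=
            mul_le_mul_of_nonneg_left h1 (abs_nonneg _)
        _ = (M * L * |u - t|) * |u - t| := by ring
        _ ≤ (M * L * r) * |u - t| := by
            apply mul_le_mul_of_nonneg_right _ (abs_nonneg _)
            exact mul_le_mul_of_nonneg_left hu3.le (mul_nonneg hMnn hLpos.le)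
        _ ≤ ε₀ * |u - t| := mul_le_mul_of_nonneg_right hrML (abs_nonneg _)
    have e1' : |∫ s in σ u..b, (g (s, u) - g (s, t) - (u - t) * h (s, t))|
        ≤ ε₀ * B * |u - t| := by
      have hbB : |b - σ u| ≤ B := by
        rw [abs_of_nonneg (by linarith : (0:ℝ) ≤ b - σ u)]
        calc b - σ u ≤ b - σ 0 := by linarith
          _ ≤ |b - σ 0| := le_abs_self _
          _ ≤ B := by simp only [hBdef]; linarith
      have h0 : (0:ℝ) ≤ ε₀ * (u - t) := mul_nonneg hε₀pos.le (by linarith)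
      calc |∫ s in σ u..b, (g (s, u) - g (s, t) - (u - t) * h (s, t))|
          ≤ (ε₀ * (u - t)) * |b - σ u| := hb1
        _ ≤ (ε₀ * (u - t)) * B := mul_le_mul_of_nonneg_left hbB h0
        _ = ε₀ * B * |u - t| := by rw [← hut']; ring
    have e2' : |∫ s in c..σ u, (g (s, t) - g (c, t))| ≤ ε₀ * L * |u - t| := by
      refine le_trans hb2 ?_
      calc ε₀ * |σ u - c| ≤ ε₀ * (L * |u - t|) :=
            mul_le_mul_of_nonneg_left hLd hε₀pos.le
        _ = ε₀ * L * |u - t| := by ring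
    rw [hkey]
    set X1 := ∫ s in σ u..b, (g (s, u) - g (s, t) - (u - t) * h (s, t)) with hX1
    set X2 := ∫ s in c..σ u, (g (s, t) - g (c, t)) with hX2
    set X3 := g (c, t) * (σ u - c - (u - t) * σ') with hX3
    set X4 := (u - t) * B1 with hX4
    calc |X1 - X2 - X3 - X4| ≤ |X1 - X2 - X3| + |X4| := abs_sub _ _
      _ ≤ (|X1 - X2| + |X3|) + |X4| := by linarith [abs_sub (X1 - X2) X3]
      _ ≤ ((|X1| + |X2|) + |X3|) + |X4| := by linarith [abs_sub X1 X2]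
      _ ≤ ε₀ * B * |u - t| + ε₀ * L * |u - t| + Mg * (ε₀ * |u - t|) + ε₀ * |u - t| := by
          linarith
      _ = ε₀ * (L + B + Mg + 1) * |u - t| := by ring
      _ = ε * |u - t| := by rw [hεval]
  · -- case u ≤ t
    have hσuc : σ u ≤ c := hσm hu ht hut
    have hut' : t - u = |u - t| := by
      rw [abs_sub_comm, abs_of_nonneg (by linarith : (0:ℝ) ≤ t - u)]
    have ig1 : IntervalIntegrable (fun s => g (s, u)) MeasureTheory.volume (σ u) c :=
      (hcontslice g hg u hu (σ u) c le_rfl).intervalIntegrable_of_Icc hσuc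
    have ig2 : IntervalIntegrable (fun s => g (s, u)) MeasureTheory.volume c b :=
      (hcontslice g hg u hu c b hσuc).intervalIntegrable_of_Icc hcb
    have ig3 : IntervalIntegrable (fun s => g (s, t)) MeasureTheory.volume c b :=
      (hcontslice g hg t ht c b le_rfl).intervalIntegrable_of_Icc hcb
    have ih3 : IntervalIntegrable (fun s => h (s, t)) MeasureTheory.volume c b :=
      (hcontslice h hh t ht c b le_rfl).intervalIntegrable_of_Icc hcb
    set A1 := ∫ s in σ u..c, g (s, u) with hA1
    set A2 := ∫ s in c..b, g (s, u) with hA2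
    set A3 := ∫ s in c..b, g (s, t) with hA3
    set B3 := ∫ s in c..b, h (s, t) with hB3
    have hLrδ : L * r ≤ δ := by
      calc L * r ≤ L * (δ / L) := mul_le_mul_of_nonneg_left hrδL hLpos.le
        _ = δ := by field_simp
    -- pointwise MVT bound on [c, b]
    have hpt : ∀ s ∈ Set.Ioc c b, |g (s, u) - g (s, t) - (u - t) * h (s, t)|
        ≤ ε₀ * (t - u) := by
      intro s hs
      have hsK : ∀ v ∈ Icc u t, (s, v) ∈ K := by
        intro v hv
        have hv' : v ∈ Icc (0:ℝ) T := ⟨le_trans hu.1 hv.1, le_trans hv.2 ht.2⟩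
        exact ⟨hv', le_trans (hσm hv' ht hv.2) hs.1.le, hs.2⟩
      have hF : ∀ v ∈ Icc u t, HasDerivWithinAt (fun w => g (s, w) - w * h (s, t))
          (h (s, v) - h (s, t)) (Icc u t) v := by
        intro v hv
        have hq : (s, v) ∈ Ereg σ T := hKsub (hsK v hv)
        have h1 := hgh (s, v) hq hs.2
        have hsub2 : Icc u t ⊆ {w | w ∈ Icc 0 T ∧ σ w ≤ s} := by
          intro w hw
          have hw' : w ∈ Icc (0:ℝ) T := ⟨le_trans hu.1 hw.1, le_trans hw.2 ht.2⟩
          exact ⟨hw', le_trans (hσm hw' ht hw.2) hs.1.le⟩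
        have h2 := (h1.mono hsub2).sub
          ((hasDerivWithinAt_id v (Icc u t)).mul_const (h (s, t)))
        simpa [Pi.sub_def] using h2
      have hbd : ∀ v ∈ Ico u t, ‖h (s, v) - h (s, t)‖ ≤ ε₀ := by
        intro v hv
        have hd : dist ((s, v) : ℝ × ℝ) ((s, t) : ℝ × ℝ) < δ₂ := by
          rw [Prod.dist_eq, dist_self, Real.dist_eq]
          apply max_lt hδ₂pos
          have h3 : |v - t| < δ₂ := by
            rw [abs_sub_comm, abs_of_nonneg (by linarith [hv.2.le] : (0:ℝ) ≤ t - v)]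
            have : t - v ≤ |u - t| := by rw [← hut']; linarith [hv.1]
            linarith [lt_of_le_of_lt this hu3, hrδ, hδδ₂]
          exact h3
        have h1 := hδ₂ (s, v) (hsK v ⟨hv.1, hv.2.le⟩) (s, t) (hsK t ⟨hut, le_rfl⟩) hd
        rw [Real.norm_eq_abs]
        exact le_of_lt (by simpa [Real.dist_eq] using h1)
      have hmvt := norm_image_sub_le_of_norm_deriv_le_segment' hF hbd t (right_mem_Icc.2 hut)
      calc |g (s, u) - g (s, t) - (u - t) * h (s, t)|
          = ‖(g (s, t) - t * h (s, t)) - (g (s, u) - u * h (s, t))‖ := by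
            rw [Real.norm_eq_abs, ← abs_neg]; ring_nf
        _ ≤ ε₀ * (t - u) := hmvt
    have hbB : |∫ s in c..b, (g (s, u) - g (s, t) - (u - t) * h (s, t))|
        ≤ (ε₀ * (t - u)) * |b - c| := by
      rw [← Real.norm_eq_abs]
      apply intervalIntegral.norm_integral_le_of_norm_le_const
      intro x hx
      rw [Set.uIoc_of_le hcb] at hx
      rw [Real.norm_eq_abs]
      exact hpt x hx
    have hTB : (∫ s in c..b, (g (s, u) - g (s, t) - (u - t) * h (s, t)))
        = A2 - A3 - (u - t) * B3 := by
      rw [intervalIntegral.integral_sub (ig2.sub ig3) (ih3.const_mul _),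
        intervalIntegral.integral_sub ig2 ig3, intervalIntegral.integral_const_mul]
    have hbA : |∫ s in σ u..c, (g (s, u) - g (c, t))| ≤ ε₀ * |c - σ u| := by
      rw [← Real.norm_eq_abs]
      apply intervalIntegral.norm_integral_le_of_norm_le_const
      intro x hx
      rw [Set.uIoc_of_le hσuc] at hx
      have hxK : (x, u) ∈ K := ⟨hu, hx.1.le, le_trans hx.2 hcb⟩
      have hcK : (c, t) ∈ K := ⟨ht, le_rfl, hcb⟩
      have hdist : dist ((x, u) : ℝ × ℝ) ((c, t) : ℝ × ℝ) < δ₁ := by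
        rw [Prod.dist_eq, Real.dist_eq, Real.dist_eq]
        apply max_lt
        · have h1 : |x - c| ≤ |σ u - c| := by
            rw [abs_sub_comm x c, abs_of_nonneg (by linarith [hx.2] : (0:ℝ) ≤ c - x),
              abs_sub_comm (σ u) c, abs_of_nonneg (by linarith : (0:ℝ) ≤ c - σ u)]
            linarith [hx.1.le]
          have h2 : L * |u - t| < L * r := mul_lt_mul_of_pos_left hu3 hLpos
          linarith [hLd, h1]
        · have h2 : (1:ℝ) * |u - t| ≤ L * |u - t| :=
            mul_le_mul_of_nonneg_right hL1 (abs_nonneg _)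
          have h3 : L * |u - t| < L * r := mul_lt_mul_of_pos_left hu3 hLpos
          linarith
      rw [Real.norm_eq_abs]
      exact le_of_lt (by simpa [Real.dist_eq] using hδ₁ _ hxK _ hcK hdist)
    have hTA : (∫ s in σ u..c, (g (s, u) - g (c, t))) = A1 - (c - σ u) * g (c, t) := by
      rw [intervalIntegral.integral_sub ig1 intervalIntegrable_const,
        intervalIntegral.integral_const, smul_eq_mul]
    have hadj : A1 + A2 = ∫ s in σ u..b, g (s, u) :=
      intervalIntegral.integral_add_adjacent_intervals ig1 ig2
    have hkey : (∫ s in σ u..b, g (s, u)) - A3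
        - (u - t) * (-σ' * g (c, t) + B3)
        = (∫ s in σ u..c, (g (s, u) - g (c, t)))
          + (∫ s in c..b, (g (s, u) - g (s, t) - (u - t) * h (s, t)))
          + g (c, t) * ((c - σ u) + (u - t) * σ') := by
      rw [hTA, hTB, ← hadj]; ring
    have e1' : |∫ s in σ u..c, (g (s, u) - g (c, t))| ≤ ε₀ * L * |u - t| := by
      have h1 : |c - σ u| ≤ L * |u - t| := by
        rw [abs_sub_comm]
        exact hLd
      calc |∫ s in σ u..c, (g (s, u) - g (c, t))| ≤ ε₀ * |c - σ u| := hbA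
        _ ≤ ε₀ * (L * |u - t|) := mul_le_mul_of_nonneg_left h1 hε₀pos.le
        _ = ε₀ * L * |u - t| := by ring
    have e2' : |∫ s in c..b, (g (s, u) - g (s, t) - (u - t) * h (s, t))|
        ≤ ε₀ * B * |u - t| := by
      have hbB2 : |b - c| ≤ B := by
        rw [abs_of_nonneg (by linarith : (0:ℝ) ≤ b - c)]
        calc b - c ≤ b - σ 0 := by linarith
          _ ≤ |b - σ 0| := le_abs_self _
          _ ≤ B := by simp only [hBdef]; linarith
      have h0 : (0:ℝ) ≤ ε₀ * (t - u) := mul_nonneg hε₀pos.le (by linarith)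
      calc |∫ s in c..b, (g (s, u) - g (s, t) - (u - t) * h (s, t))|
          ≤ (ε₀ * (t - u)) * |b - c| := hbB
        _ ≤ (ε₀ * (t - u)) * B := mul_le_mul_of_nonneg_left hbB2 h0
        _ = ε₀ * B * |u - t| := by rw [← hut']; ring
    have e3 : |g (c, t) * ((c - σ u) + (u - t) * σ')| ≤ Mg * (ε₀ * |u - t|) := by
      rw [abs_mul]
      have : |(c - σ u) + (u - t) * σ'| = |σ u - c - (u - t) * σ'| := by
        rw [← abs_neg]; ring_nf
      rw [this]
      exact mul_le_mul hMggt hu1 (abs_nonneg _) (by linarith)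
    rw [hkey]
    set X1 := ∫ s in σ u..c, (g (s, u) - g (c, t)) with hX1
    set X2 := ∫ s in c..b, (g (s, u) - g (s, t) - (u - t) * h (s, t)) with hX2
    set X3 := g (c, t) * ((c - σ u) + (u - t) * σ') with hX3
    calc |X1 + X2 + X3| ≤ |X1 + X2| + |X3| := abs_add_le _ _
      _ ≤ (|X1| + |X2|) + |X3| := by linarith [abs_add_le X1 X2]
      _ ≤ ε₀ * L * |u - t| + ε₀ * B * |u - t| + Mg * (ε₀ * |u - t|) := by linarith
      _ ≤ ε₀ * (L + B + Mg + 1) * |u - t| := by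
          have hq : ε₀ * (L + B + Mg + 1) * |u - t|
              = ε₀ * L * |u - t| + ε₀ * B * |u - t| + Mg * (ε₀ * |u - t|)
                + ε₀ * |u - t| := by ring
          rw [hq]
          linarith [mul_nonneg hε₀pos.le (abs_nonneg (u - t))]
      _ = ε * |u - t| := by rw [hεval]


end ShockAux

/-- Proposition 3.5 (dissipation): for a classical shock solution on `[0,T]` with shock
front `σ` and a material segment `[a,b]` with `a < σ(t) < b`, the total energy
`K + E` satisfies `(K+E)'(t) = P(t) + Q(t)` where `P(t) = N(b,t) χ_t(b,t)` is the
power exerted by the tensile forces and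
`Q(t) = -(σ'(t)/2) (N₁ - N(σ(t)⁺,t))² (σ'(t)² - 1) < 0` is the (negative) heat power. -/
theorem shock_dissipation
    (N₁ η τ ζ σ₀ T a b : ℝ) (χ₀ χ₁ N₀ : ℝ → ℝ)
    (hN₁ : 0 < N₁) (hη : 0 < η) (hηN : η < N₁) (hτη : η < τ) (hτN : τ < N₁) (hζ : 0 ≤ ζ)
    (χ N : ℝ → ℝ → ℝ) (σ : ℝ → ℝ)
    (hsol : IsShockSolution N₁ η τ ζ σ₀ T χ₀ χ₁ N₀ χ N σ)
    (ha : 0 < a) (hb : 0 < b)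
    (hab : ∀ t ∈ Icc (0 : ℝ) T, a < σ t ∧ σ t < b) :
    ∀ t ∈ Icc (0 : ℝ) T,
      HasDerivWithinAt
        (fun u => (∫ s in σ u..b, (pder (uc χ) (Ereg σ T) (0, 1) (s, u)) ^ 2 / 2)
          + (∫ s in a..σ u, N₁ ^ 2 / 2)
          + ∫ s in σ u..b, (N s u) ^ 2 / 2)
        (N b t * pder (uc χ) (Ereg σ T) (0, 1) (b, t)
          + (-(derivWithin σ (Icc 0 T) t / 2) * (N₁ - N (σ t) t) ^ 2
              * ((derivWithin σ (Icc 0 T) t) ^ 2 - 1)))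
        (Icc 0 T) t
      ∧ -(derivWithin σ (Icc 0 T) t / 2) * (N₁ - N (σ t) t) ^ 2
          * ((derivWithin σ (Icc 0 T) t) ^ 2 - 1) < 0 := by
  intro t ht
  have hT0 : (0:ℝ) ≤ T := le_trans ht.1 ht.2
  have hptS : ((σ t, t) : ℝ × ℝ) ∈ Ereg σ T := ⟨ht, le_refl _⟩
  have hnlt : N (σ t) t < N₁ := hsol.N_lt _ hptS
  have hsgt : 1 < derivWithin σ (Icc 0 T) t := hsol.sigma_der_gt t ht
  have hQ : -(derivWithin σ (Icc 0 T) t / 2) * (N₁ - N (σ t) t) ^ 2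
      * ((derivWithin σ (Icc 0 T) t) ^ 2 - 1) < 0 := by
    have h1 : 0 < (N₁ - N (σ t) t) ^ 2 := pow_pos (by linarith) 2
    have h2 : 0 < derivWithin σ (Icc 0 T) t := by linarith
    have h3 : 1 < (derivWithin σ (Icc 0 T) t) ^ 2 := by nlinarith
    nlinarith [mul_pos (mul_pos (half_pos h2) h1) (sub_pos.2 h3)]
  refine ⟨?_, hQ⟩
  rcases eq_or_lt_of_le hT0 with hT | hT
  · -- degenerate case T = 0
    have ht0 : t = 0 := le_antisymm (hT ▸ ht.2) ht.1
    have hIcc : Icc (0:ℝ) T = {0} := by rw [← hT, Icc_self]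
    rw [hIcc, ht0]
    exact ShockAux.hasDerivWithinAt_singleton' _ _ _
  -- main case 0 < T
  set S := Ereg σ T with hSdef
  have hσ2 := hsol.sigma_smooth
  have hσc : ContinuousOn σ (Icc 0 T) := hσ2.continuousOn
  have hIccU : UniqueDiffOn ℝ (Icc (0:ℝ) T) := uniqueDiffOn_Icc hT
  have hσdiff : DifferentiableOn ℝ σ (Icc 0 T) := hσ2.differentiableOn two_ne_zero
  have hσ'c : ContinuousOn (derivWithin σ (Icc 0 T)) (Icc 0 T) :=
    hσ2.continuousOn_derivWithin hIccU one_le_two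
  obtain ⟨Kσ, hKσ⟩ := isCompact_Icc.exists_bound_of_continuousOn hσ'c
  have hKσ0 : 0 ≤ Kσ := le_trans (norm_nonneg _) (hKσ 0 ⟨le_rfl, hT0⟩)
  have hlip : ∀ u ∈ Icc (0:ℝ) T, ∀ v ∈ Icc (0:ℝ) T, |σ u - σ v| ≤ Kσ * |u - v| := by
    intro u hu v hv
    have := Convex.norm_image_sub_le_of_norm_hasDerivWithin_le
      (fun x hx => (hσdiff x hx).hasDerivWithinAt) (fun x hx => hKσ x hx)
      (convex_Icc 0 T) hv hu
    simpa [Real.norm_eq_abs] using this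
  have hUD : UniqueDiffOn ℝ S := fun p hp => (ShockAux.ereg_cone hT hKσ0 hlip hp).1
  have hclos : ∀ p ∈ S, p ∈ closure (interior S) :=
    fun p hp => (ShockAux.ereg_cone hT hKσ0 hlip hp).2
  have hmono : MonotoneOn σ (Icc 0 T) := by
    apply monotoneOn_of_deriv_nonneg (convex_Icc 0 T) hσc
    · intro x hx
      rw [interior_Icc] at hx
      exact ((hσdiff x (Ioo_subset_Icc_self hx)).differentiableAt
        (Icc_mem_nhds hx.1 hx.2)).differentiableWithinAt
    · intro x hx
      rw [interior_Icc] at hx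
      have h1 := hsol.sigma_der_gt x (Ioo_subset_Icc_self hx)
      rw [derivWithin_of_mem_nhds (Icc_mem_nhds hx.1 hx.2)] at h1
      linarith
  set σ' := derivWithin σ (Icc 0 T) t with hσ'def
  have hσd : HasDerivWithinAt σ σ' (Icc 0 T) t := (hσdiff t ht).hasDerivWithinAt
  -- smoothness facts
  have hχ := hsol.chi_smooth
  have hNc := hsol.N_smooth
  have hχd : DifferentiableOn ℝ (uc χ) S := hχ.differentiableOn two_ne_zero
  have hNd : DifferentiableOn ℝ (uc N) S := hNc.differentiableOn one_ne_zero
  have hNcont : ContinuousOn (uc N) S := hNc.continuousOn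
  have hDχ : ContDiffOn ℝ 1 (fderivWithin ℝ (uc χ) S) S :=
    hχ.fderivWithin hUD (by norm_num)
  set f₁ : ℝ × ℝ → ℝ := pder (uc χ) S (0, 1) with hf₁def
  have hf₁ : ContDiffOn ℝ 1 f₁ S := hDχ.clm_apply contDiffOn_const
  have hf₁c : ContinuousOn f₁ S := hf₁.continuousOn
  have hf₁d : DifferentiableOn ℝ f₁ S := hf₁.differentiableOn one_ne_zero
  have hf₁t_c : ContinuousOn (pder f₁ S (0, 1)) S := by
    have h1 : ContinuousOn (fderivWithin ℝ f₁ S) S :=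
      hf₁.continuousOn_fderivWithin hUD le_rfl
    exact (ContinuousLinearMap.apply ℝ ℝ (((0:ℝ), (1:ℝ)) : ℝ × ℝ)).continuous.comp_continuousOn h1
  have hNt_c : ContinuousOn (pder (uc N) S (0, 1)) S := by
    have h1 : ContinuousOn (fderivWithin ℝ (uc N) S) S :=
      hNc.continuousOn_fderivWithin hUD le_rfl
    exact (ContinuousLinearMap.apply ℝ ℝ (((0:ℝ), (1:ℝ)) : ℝ × ℝ)).continuous.comp_continuousOn h1
  -- vertical slice derivatives
  have hvert : ∀ (f : ℝ × ℝ → ℝ), DifferentiableOn ℝ f S →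
      ∀ q1 q2 : ℝ, (q1, q2) ∈ S →
      HasDerivWithinAt (fun w => f (q1, w)) (pder f S (0, 1) (q1, q2))
        {w | w ∈ Icc 0 T ∧ σ w ≤ q1} q2 := by
    intro f hf q1 q2 hq
    have hι : HasDerivWithinAt (fun w : ℝ => ((q1 : ℝ), w)) (((0 : ℝ), (1 : ℝ)) : ℝ × ℝ)
        {w | w ∈ Icc 0 T ∧ σ w ≤ q1} q2 :=
      ((hasDerivAt_const q2 q1).prodMk (hasDerivAt_id q2)).hasDerivWithinAt
    have hmaps : MapsTo (fun w : ℝ => ((q1 : ℝ), w)) {w | w ∈ Icc 0 T ∧ σ w ≤ q1} S :=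
      fun w hw => ⟨hw.1, hw.2⟩
    exact (hf (q1, q2) hq).hasFDerivWithinAt.comp_hasDerivWithinAt q2 hι hmaps
  -- horizontal slice derivatives at time t
  have hcb : σ t ≤ b := (hab t ht).2.le
  have hhor : ∀ (f : ℝ × ℝ → ℝ), DifferentiableOn ℝ f S → ∀ s ∈ Icc (σ t) b,
      HasDerivWithinAt (fun z => f (z, t)) (pder f S (1, 0) (s, t)) (Icc (σ t) b) s := by
    intro f hf s hs
    have hmaps : MapsTo (fun z : ℝ => (z, (t : ℝ))) (Icc (σ t) b) S := fun z hz => ⟨ht, hz.1⟩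
    have hι : HasDerivWithinAt (fun z : ℝ => (z, (t : ℝ))) (((1 : ℝ), (0 : ℝ)) : ℝ × ℝ)
        (Icc (σ t) b) s :=
      ((hasDerivAt_id s).prodMk (hasDerivAt_const s t)).hasDerivWithinAt
    exact (hf (s, t) ⟨ht, hs.1⟩).hasFDerivWithinAt.comp_hasDerivWithinAt s hι hmaps
  have hslice_t : ∀ (f : ℝ × ℝ → ℝ), ContinuousOn f S →
      ContinuousOn (fun z => f (z, t)) (Icc (σ t) b) := by
    intro f hf
    apply hf.comp ((continuous_id.prodMk continuous_const).continuousOn)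
    exact fun z hz => ⟨ht, hz.1⟩
  -- mixed partials
  have hNeqn : EqOn (uc N) (pder (uc χ) S (1, 0)) S := fun p hp => hsol.N_eq p hp
  have key1 : ∀ p ∈ S, pder (uc N) S (1, 0) p = pder f₁ S (0, 1) p := by
    intro p hp
    have h1 : pder (uc N) S (1, 0) p = pder (pder (uc χ) S (1, 0)) S (1, 0) p := by
      show fderivWithin ℝ (uc N) S p (1, 0)
        = fderivWithin ℝ (pder (uc χ) S (1, 0)) S p (1, 0)
      rw [fderivWithin_congr hNeqn (hNeqn hp)]
    rw [h1, ← hsol.wave p hp, hf₁def]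
  have hd2' : ∀ p ∈ S, DifferentiableWithinAt ℝ (fderivWithin ℝ (uc χ) S) S p :=
    fun p hp => (hDχ.differentiableOn one_ne_zero) p hp
  have key2 : ∀ p ∈ S, pder f₁ S (1, 0) p = pder (uc N) S (0, 1) p := by
    intro p hp
    have hsym : IsSymmSndFDerivWithinAt ℝ (uc χ) S p :=
      (hχ p hp).isSymmSndFDerivWithinAt minSmoothness_of_isRCLikeNormedField.le hUD (hclos p hp) hp
    have e1 : pder f₁ S (1, 0) p
        = fderivWithin ℝ (fderivWithin ℝ (uc χ) S) S p ((1 : ℝ), (0 : ℝ)) ((0:ℝ), (1:ℝ)) := by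
      have hclm := fderivWithin_clm_apply (hUD p hp) (hd2' p hp)
        (differentiableWithinAt_const (((0:ℝ), (1:ℝ)) : ℝ × ℝ))
      show fderivWithin ℝ (fun q => fderivWithin ℝ (uc χ) S q ((0:ℝ), (1:ℝ))) S p (1, 0) = _
      rw [hclm]
      simp [fderivWithin_const_apply _]
    have e2 : pder (pder (uc χ) S (1, 0)) S (0, 1) p
        = fderivWithin ℝ (fderivWithin ℝ (uc χ) S) S p ((0 : ℝ), (1 : ℝ)) ((1:ℝ), (0:ℝ)) := by
      have hclm := fderivWithin_clm_apply (hUD p hp) (hd2' p hp)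
        (differentiableWithinAt_const (((1:ℝ), (0:ℝ)) : ℝ × ℝ))
      show fderivWithin ℝ (fun q => fderivWithin ℝ (uc χ) S q ((1:ℝ), (0:ℝ))) S p (0, 1) = _
      rw [hclm]
      simp [fderivWithin_const_apply _]
    have e3 : pder (pder (uc χ) S (1, 0)) S (0, 1) p = pder (uc N) S (0, 1) p := by
      show fderivWithin ℝ (pder (uc χ) S (1, 0)) S p (0, 1)
        = fderivWithin ℝ (uc N) S p (0, 1)
      rw [fderivWithin_congr hNeqn (hNeqn hp)]
    rw [e1, hsym ((1:ℝ), (0:ℝ)) ((0:ℝ), (1:ℝ)), ← e2, e3]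
  -- FTC along the slice at time t
  have hh₁c : ContinuousOn (fun p : ℝ × ℝ => f₁ p * pder f₁ S (0, 1) p) S := hf₁c.mul hf₁t_c
  have hh₂c : ContinuousOn (fun p : ℝ × ℝ => uc N p * pder (uc N) S (0, 1) p) S :=
    hNcont.mul hNt_c
  have ihh₁ : IntervalIntegrable (fun s => f₁ (s, t) * pder f₁ S (0, 1) (s, t))
      MeasureTheory.volume (σ t) b :=
    (hslice_t _ hh₁c).intervalIntegrable_of_Icc hcb
  have ihh₂ : IntervalIntegrable (fun s => uc N (s, t) * pder (uc N) S (0, 1) (s, t))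
      MeasureTheory.volume (σ t) b :=
    (hslice_t _ hh₂c).intervalIntegrable_of_Icc hcb
  have hFTC : (∫ s in σ t..b, (f₁ (s, t) * pder f₁ S (0, 1) (s, t)
        + uc N (s, t) * pder (uc N) S (0, 1) (s, t)))
      = uc N (b, t) * f₁ (b, t) - uc N (σ t, t) * f₁ (σ t, t) := by
    apply intervalIntegral.integral_eq_sub_of_hasDeriv_right_of_le hcb
    · exact (hslice_t _ hNcont).mul (hslice_t _ hf₁c)
    · intro s hs
      have hsS : ((s, t) : ℝ × ℝ) ∈ S := ⟨ht, hs.1.le⟩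
      have h1 := (hhor (uc N) hNd s ⟨hs.1.le, hs.2.le⟩).mul
        (hhor f₁ hf₁d s ⟨hs.1.le, hs.2.le⟩)
      have h2 := h1.mono_of_mem_nhdsWithin (Icc_mem_nhdsGT_of_mem ⟨hs.1.le, hs.2⟩)
      have h3 : pder (uc N) S (1, 0) (s, t) * f₁ (s, t)
            + uc N (s, t) * pder f₁ S (1, 0) (s, t)
          = f₁ (s, t) * pder f₁ S (0, 1) (s, t)
            + uc N (s, t) * pder (uc N) S (0, 1) (s, t) := by
        rw [key1 (s, t) hsS, key2 (s, t) hsS]; ring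
      exact h3 ▸ h2
    · exact ihh₁.add ihh₂
  -- the three derivative computations
  have hble : ∀ u ∈ Icc (0:ℝ) T, σ u ≤ b := fun u hu => (hab u hu).2.le
  have hg₁c : ContinuousOn (fun p : ℝ × ℝ => (f₁ p) ^ 2 / 2) S := (hf₁c.pow 2).div_const 2
  have hg₂c : ContinuousOn (fun p : ℝ × ℝ => (uc N p) ^ 2 / 2) S := (hNcont.pow 2).div_const 2
  have hgh₁ : ∀ q ∈ S, q.1 ≤ b →
      HasDerivWithinAt (fun w => (f₁ (q.1, w)) ^ 2 / 2)
        (f₁ q * pder f₁ S (0, 1) q) {w | w ∈ Icc 0 T ∧ σ w ≤ q.1} q.2 := by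
    rintro ⟨q1, q2⟩ hq _
    have h1 := hvert f₁ hf₁d q1 q2 hq
    have h2 := (h1.mul h1).div_const 2
    have h3 : (pder f₁ S (0, 1) (q1, q2) * f₁ (q1, q2)
          + f₁ (q1, q2) * pder f₁ S (0, 1) (q1, q2)) / 2
        = f₁ (q1, q2) * pder f₁ S (0, 1) (q1, q2) := by ring
    simp only [pow_two]
    exact h3 ▸ h2
  have hgh₂ : ∀ q ∈ S, q.1 ≤ b →
      HasDerivWithinAt (fun w => (uc N (q.1, w)) ^ 2 / 2)
        (uc N q * pder (uc N) S (0, 1) q) {w | w ∈ Icc 0 T ∧ σ w ≤ q.1} q.2 := by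
    rintro ⟨q1, q2⟩ hq _
    have h1 := hvert (uc N) hNd q1 q2 hq
    have h2 := (h1.mul h1).div_const 2
    have h3 : (pder (uc N) S (0, 1) (q1, q2) * uc N (q1, q2)
          + uc N (q1, q2) * pder (uc N) S (0, 1) (q1, q2)) / 2
        = uc N (q1, q2) * pder (uc N) S (0, 1) (q1, q2) := by ring
    simp only [pow_two]
    exact h3 ▸ h2
  have hD1 := ShockAux.deriv_moving_integral b t ht
    (fun p : ℝ × ℝ => (f₁ p) ^ 2 / 2) (fun p : ℝ × ℝ => f₁ p * pder f₁ S (0, 1) p)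
    hσc hmono hσd hble hg₁c hh₁c hgh₁
  have hD2 := ShockAux.deriv_moving_integral b t ht
    (fun p : ℝ × ℝ => (uc N p) ^ 2 / 2) (fun p : ℝ × ℝ => uc N p * pder (uc N) S (0, 1) p)
    hσc hmono hσd hble hg₂c hh₂c hgh₂
  have hMid : HasDerivWithinAt (fun u => ∫ _s in a..σ u, (N₁ ^ 2 / 2 : ℝ))
      (σ' * (N₁ ^ 2 / 2)) (Icc 0 T) t := by
    have h1 : (fun u => ∫ _s in a..σ u, (N₁ ^ 2 / 2 : ℝ))
        = fun u => (σ u - a) * (N₁ ^ 2 / 2) := by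
      funext u
      rw [intervalIntegral.integral_const, smul_eq_mul]
    rw [h1]
    exact (hσd.sub_const a).mul_const (N₁ ^ 2 / 2)
  have hsum := (hD1.add hMid).add hD2
  -- algebraic identification of the derivative
  have hσ'eq := hsol.sigma_der t ht
  rw [← hSdef, ← hσ'def, ← hf₁def] at hσ'eq
  have hne : N₁ - N (σ t) t ≠ 0 := by
    have := hnlt; intro hcon; linarith [sub_eq_zero.1 hcon]
  have he : f₁ (σ t, t) = σ' * (N₁ - N (σ t) t) := by
    rw [hσ'eq]
    field_simp
  have hIsum : (∫ s in σ t..b, f₁ (s, t) * pder f₁ S (0, 1) (s, t))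
      + (∫ s in σ t..b, uc N (s, t) * pder (uc N) S (0, 1) (s, t))
      = N b t * f₁ (b, t) - N (σ t) t * f₁ (σ t, t) := by
    rw [← intervalIntegral.integral_add ihh₁ ihh₂]
    exact hFTC
  have hfin : (-σ' * ((f₁ (σ t, t)) ^ 2 / 2)
        + (∫ s in σ t..b, f₁ (s, t) * pder f₁ S (0, 1) (s, t)))
      + σ' * (N₁ ^ 2 / 2)
      + (-σ' * ((uc N (σ t, t)) ^ 2 / 2)
        + (∫ s in σ t..b, uc N (s, t) * pder (uc N) S (0, 1) (s, t)))
      = N b t * f₁ (b, t)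
        + (-(σ' / 2) * (N₁ - N (σ t) t) ^ 2 * (σ' ^ 2 - 1)) := by
    have huN : uc N (σ t, t) = N (σ t) t := rfl
    rw [huN]
    linear_combination hIsum
      - (σ' * (f₁ (σ t, t) + σ' * (N₁ - N (σ t) t)) / 2 + N (σ t) t) * he
  exact hfin ▸ hsum
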